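/- Let $H : I^2 \to G^\star$ be a smooth map into a Lie group $G^\star$, and set $a = \delta_r^u H$, $b = \delta_r^\varepsilon H$ (right logarithmic derivatives: $\delta_r^u H = dr_{H}^{-1}\partial_u H$, etc.). Let $G^\star$ act smoothly on a manifold $G$ via $*$, let $\gamma_- : I \to G$ satisfy $\dot\gamma_-(u) = \Upsilon(a(0,u))_{\gamma_-(u)}$ where $\Upsilon$ denotes fundamental vector fields, and define $X(\varepsilon,u) = (H(\varepsilon,u)\cdot H(0,u)^{-1}) * \gamma_-(u)$. Then $\partial_\varepsilon X(\varepsilon,u) = \Upsilon(b(\varepsilon,u))_{X(\varepsilon,u)}$ and $\partial_u X(\varepsilon,u) = \Upsilon(a(\varepsilon,u))_{X(\varepsilon,u)}$. -/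

import Mathlib

open scoped Manifold

section Aux
variable {E : Type*} [NormedAddCommGroup E] [NormedSpace ℝ E]
    {HK : Type*} [TopologicalSpace HK] {I : ModelWithCorners ℝ E HK}
    {K : Type*} [TopologicalSpace K] [ChartedSpace HK K] [Group K]
    [IsManifold I (⊤ : ℕ∞) K] [LieGroup I (⊤ : ℕ∞) K]
    {Q : Type*} [NormedAddCommGroup Q] [NormedSpace ℝ Q]
    {act : K → Q → Q}

/-- smoothness of act in first variable -/
lemma aux_act_smooth_left
    (hactsmooth : ContMDiff (I.prod 𝓘(ℝ, Q)) 𝓘(ℝ, Q) (⊤ : ℕ∞) fun q : K × Q => act q.1 q.2)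
    (y : Q) : ContMDiff I 𝓘(ℝ, Q) (⊤ : ℕ∞) fun k => act k y :=
  hactsmooth.comp (contMDiff_id.prodMk contMDiff_const)

lemma aux_act_smooth_right
    (hactsmooth : ContMDiff (I.prod 𝓘(ℝ, Q)) 𝓘(ℝ, Q) (⊤ : ℕ∞) fun q : K × Q => act q.1 q.2)
    (g : K) : ContMDiff 𝓘(ℝ, Q) 𝓘(ℝ, Q) (⊤ : ℕ∞) fun y => act g y :=
  hactsmooth.comp (contMDiff_const.prodMk contMDiff_id)

/-- Core chain-rule lemma. -/
lemma aux_deriv_act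
    (hactsmooth : ContMDiff (I.prod 𝓘(ℝ, Q)) 𝓘(ℝ, Q) (⊤ : ℕ∞) fun q : K × Q => act q.1 q.2)
    (hactmul : ∀ k₁ k₂ x, act (k₁ * k₂) x = act k₁ (act k₂ x))
    (h : ℝ → K) (t : ℝ)
    (hh : MDifferentiableAt 𝓘(ℝ, ℝ) I h t) (ξ : E)
    (hξ : mfderiv 𝓘(ℝ, ℝ) I h t (1 : ℝ) = mfderiv I I (fun k => k * h t) 1 ξ) (y : Q) :
    deriv (fun s => act (h s) y) t
      = mfderiv I 𝓘(ℝ, Q) (fun k => act k (act (h t) y)) 1 ξ := by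
  have hacty := aux_act_smooth_left hactsmooth y
  have h1 : deriv (fun s => act (h s) y) t
      = mfderiv 𝓘(ℝ, ℝ) 𝓘(ℝ, Q) (fun s => act (h s) y) t (1 : ℝ) := by
    rw [mfderiv_eq_fderiv]; exact fderiv_apply_one_eq_deriv.symm
  have h2 : mfderiv 𝓘(ℝ, ℝ) 𝓘(ℝ, Q) (fun s => act (h s) y) t
      = (mfderiv I 𝓘(ℝ, Q) (fun k => act k y) (h t)).comp (mfderiv 𝓘(ℝ, ℝ) I h t) :=
    mfderiv_comp t (hacty.mdifferentiableAt (by simp)) hh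
  have h3 : mfderiv I 𝓘(ℝ, Q) ((fun k => act k y) ∘ (fun k => k * h t)) 1
      = (mfderiv I 𝓘(ℝ, Q) (fun k => act k y) (h t)).comp
          (mfderiv I I (fun k => k * h t) 1) := by
    have := mfderiv_comp_of_eq (I' := I) (x := (1 : K)) (y := h t)
      (hacty.mdifferentiableAt (by simp))
      ((contMDiff_mul_right (a := h t) (n := ((⊤ : ℕ∞) : WithTop ℕ∞))).mdifferentiableAt (by simp)) (one_mul _)
    rw [this]; rw [one_mul (h t)]
  have heq : ((fun k => act k y) ∘ (fun k => k * h t)) = fun k => act k (act (h t) y) := by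
    funext k; simp only [Function.comp_apply]; exact hactmul k (h t) y
  rw [heq] at h3
  rw [h1, h2]
  change (mfderiv I 𝓘(ℝ, Q) (fun k => act k y) (h t)) (mfderiv 𝓘(ℝ, ℝ) I h t (1 : ℝ)) = _
  rw [hξ, h3]
  rfl

end Aux

section Aux2
variable {E : Type*} [NormedAddCommGroup E] [NormedSpace ℝ E]
    {HK : Type*} [TopologicalSpace HK] {I : ModelWithCorners ℝ E HK}
    {K : Type*} [TopologicalSpace K] [ChartedSpace HK K] [Group K]
    [IsManifold I (⊤ : ℕ∞) K] [LieGroup I (⊤ : ℕ∞) K]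
    {Q : Type*} [NormedAddCommGroup Q] [NormedSpace ℝ Q]
    {act : K → Q → Q}

/-- The key cancellation: the sum of the derivatives of `k ↦ act (g⁻¹ * k⁻¹) y` and
`k ↦ act (g⁻¹ * k) y` at `1` vanishes. -/
lemma aux_cancel
    (hactsmooth : ContMDiff (I.prod 𝓘(ℝ, Q)) 𝓘(ℝ, Q) (⊤ : ℕ∞) fun q : K × Q => act q.1 q.2)
    (g : K) (y : Q) (ξ : E) :
    mfderiv I 𝓘(ℝ, Q) (fun k => act (g⁻¹ * k⁻¹) y) 1 ξ
      = - mfderiv I 𝓘(ℝ, Q) (fun k => act (g⁻¹ * k) y) 1 ξ := by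
  set Φ : K × K → Q := fun p => act (g⁻¹ * p.1⁻¹ * p.2) y with hΦ
  have hΦs : ContMDiff (I.prod I) 𝓘(ℝ, Q) (⊤ : ℕ∞) Φ :=
    hactsmooth.comp (((contMDiff_const.mul contMDiff_fst.inv).mul contMDiff_snd).prodMk
      contMDiff_const)
  have hdiag : MDifferentiableAt I (I.prod I) (fun k : K => (k, k)) 1 :=
    mdifferentiableAt_id.prodMk mdifferentiableAt_id
  have hconst : (Φ ∘ fun k : K => (k, k)) = fun _ => act g⁻¹ y := by
    funext k; simp only [Φ, Function.comp_apply, inv_mul_cancel_right]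
  have h0 : mfderiv I 𝓘(ℝ, Q) (Φ ∘ fun k : K => (k, k)) 1 ξ = 0 := by
    rw [hconst, mfderiv_const]; rfl
  have hid : mfderiv I I (fun k : K => k) 1 = ContinuousLinearMap.id ℝ (TangentSpace I (1 : K)) :=
    mfderiv_id
  have hB' : mfderiv I (I.prod I) (fun k : K => (k, k)) 1
      = (mfderiv I I (fun k : K => k) 1).prod (mfderiv I I (fun k : K => k) 1) :=
    MDifferentiableAt.mfderiv_prod mdifferentiableAt_id mdifferentiableAt_id
  have hB : mfderiv I (I.prod I) (fun k : K => (k, k)) 1 ξ = (ξ, ξ) := by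
    rw [hB', hid]; rfl
  have hcomp : mfderiv I 𝓘(ℝ, Q) (Φ ∘ fun k : K => (k, k)) 1 ξ
      = mfderiv (I.prod I) 𝓘(ℝ, Q) Φ (1, 1) (ξ, ξ) := by
    rw [mfderiv_comp 1 (hΦs.mdifferentiableAt (by simp)) hdiag]
    exact congrArg _ hB
  have hsplit := mfderiv_prod_eq_add_apply (I := I) (I' := I) (I'' := 𝓘(ℝ, Q))
    (f := Φ) (p := ((1 : K), (1 : K))) (v := (ξ, ξ)) (hΦs.mdifferentiableAt (by simp))
  simp only [hΦ] at hsplit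
  have e1 : (fun z : K => act (g⁻¹ * z⁻¹ * ((1 : K), (1 : K)).2) y)
      = fun k : K => act (g⁻¹ * k⁻¹) y := by funext z; rw [mul_one]
  have e2 : (fun z : K => act (g⁻¹ * (((1 : K), (1 : K)).1)⁻¹ * z) y)
      = fun k : K => act (g⁻¹ * k) y := by funext z; rw [inv_one, mul_one]
  rw [e1, e2] at hsplit
  rw [hcomp, hsplit] at h0
  exact eq_neg_of_add_eq_zero_left h0
lemma aux_const
    (hactsmooth : ContMDiff (I.prod 𝓘(ℝ, Q)) 𝓘(ℝ, Q) (⊤ : ℕ∞) fun q : K × Q => act q.1 q.2)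
    (hactone : ∀ x, act 1 x = x)
    (hactmul : ∀ k₁ k₂ x, act (k₁ * k₂) x = act k₁ (act k₂ x))
    (h : ℝ → K) (hhs : ContMDiff 𝓘(ℝ, ℝ) I (⊤ : ℕ∞) h) (α : ℝ → E)
    (hα : ∀ u, mfderiv 𝓘(ℝ, ℝ) I h u (1 : ℝ) = mfderiv I I (fun k => k * h u) 1 (α u))
    (γ : ℝ → Q) (hγsmooth : ContDiff ℝ (⊤ : ℕ∞) γ)
    (hγ : ∀ u, deriv γ u = mfderiv I 𝓘(ℝ, Q) (fun k => act k (γ u)) 1 (α u)) :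
    ∀ u, act (h u)⁻¹ (γ u) = act (h 0)⁻¹ (γ 0) := by
  have hγm : ContMDiff 𝓘(ℝ, ℝ) 𝓘(ℝ, Q) (⊤ : ℕ∞) γ := contMDiff_iff_contDiff.mpr (hγsmooth.of_le (by simp))
  have hinvh : ContMDiff 𝓘(ℝ, ℝ) I (⊤ : ℕ∞) (fun s => (h s)⁻¹) := hhs.inv
  have hPs : ContMDiff 𝓘(ℝ, ℝ) (I.prod 𝓘(ℝ, Q)) (⊤ : ℕ∞) (fun s => ((h s)⁻¹, γ s)) :=
    hinvh.prodMk hγm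
  have hcs : ContMDiff 𝓘(ℝ, ℝ) 𝓘(ℝ, Q) (⊤ : ℕ∞) (fun s => act (h s)⁻¹ (γ s)) :=
    hactsmooth.comp hPs
  have hactl : ∀ y : Q, ContMDiff I 𝓘(ℝ, Q) (⊤ : ℕ∞) fun k => act k y := fun y =>
    hactsmooth.comp (contMDiff_id.prodMk contMDiff_const)
  have hderiv : ∀ u, deriv (fun s => act (h s)⁻¹ (γ s)) u = 0 := by
    intro u
    -- derivative of the inverted curve
    have hv₁ : mfderiv 𝓘(ℝ, ℝ) I (fun s => (h s)⁻¹) u (1 : ℝ)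
        = mfderiv I I (fun k => (h u)⁻¹ * k⁻¹) 1 (α u) := by
      have h1 : mfderiv 𝓘(ℝ, ℝ) I (fun s => (h s)⁻¹) u (1 : ℝ)
          = mfderiv I I (fun k : K => k⁻¹) (h u) (mfderiv 𝓘(ℝ, ℝ) I h u (1 : ℝ)) := by
        rw [show (fun s => (h s)⁻¹) = (fun k : K => k⁻¹) ∘ h from rfl]
        exact mfderiv_comp_apply_of_eq u ((contMDiff_inv I ((⊤ : ℕ∞) : WithTop ℕ∞)).mdifferentiableAt (by simp))
          (hhs.mdifferentiableAt (by simp)) rfl (1 : ℝ)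
      have h2 := mfderiv_comp_apply_of_eq (I := I) (I' := I) (I'' := I)
        (f := fun k => k * h u) (g := fun k : K => k⁻¹) 1
        ((contMDiff_inv I ((⊤ : ℕ∞) : WithTop ℕ∞)).mdifferentiableAt (by simp))
        ((contMDiff_mul_right (n := ((⊤ : ℕ∞) : WithTop ℕ∞))).mdifferentiableAt (by simp)) (one_mul (h u)) (α u)
      rw [h1, hα u, ← h2]
      exact DFunLike.congr_fun
        (mfderiv_congr (I := I) (I' := I) (x := (1 : K))
          (funext fun k => by simp [Function.comp, mul_inv_rev])) (α u)
    -- derivative of γ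
    have hv₂ : mfderiv 𝓘(ℝ, ℝ) 𝓘(ℝ, Q) γ u (1 : ℝ)
        = mfderiv I 𝓘(ℝ, Q) (fun k => act k (γ u)) 1 (α u) := by
      have e : deriv γ u = mfderiv 𝓘(ℝ, ℝ) 𝓘(ℝ, Q) γ u (1 : ℝ) := by
        rw [mfderiv_eq_fderiv]; exact fderiv_apply_one_eq_deriv.symm
      rw [← e]; exact hγ u
    -- the pair map
    have hP : mfderiv 𝓘(ℝ, ℝ) (I.prod 𝓘(ℝ, Q)) (fun s => ((h s)⁻¹, γ s)) u (1 : ℝ)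
        = (mfderiv 𝓘(ℝ, ℝ) I (fun s => (h s)⁻¹) u (1 : ℝ),
           mfderiv 𝓘(ℝ, ℝ) 𝓘(ℝ, Q) γ u (1 : ℝ)) := by
      rw [MDifferentiableAt.mfderiv_prod (hinvh.mdifferentiableAt (by simp))
        (hγm.mdifferentiableAt (by simp))]
      rfl
    -- chain rule for c
    have hc : deriv (fun s => act (h s)⁻¹ (γ s)) u
        = mfderiv (I.prod 𝓘(ℝ, Q)) 𝓘(ℝ, Q) (fun q : K × Q => act q.1 q.2) ((h u)⁻¹, γ u)
            (mfderiv 𝓘(ℝ, ℝ) (I.prod 𝓘(ℝ, Q)) (fun s => ((h s)⁻¹, γ s)) u (1 : ℝ)) := by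
      have e : deriv (fun s => act (h s)⁻¹ (γ s)) u
          = mfderiv 𝓘(ℝ, ℝ) 𝓘(ℝ, Q) (fun s => act (h s)⁻¹ (γ s)) u (1 : ℝ) := by
        rw [mfderiv_eq_fderiv]; exact fderiv_apply_one_eq_deriv.symm
      rw [e]
      rw [show (fun s => act (h s)⁻¹ (γ s))
          = (fun q : K × Q => act q.1 q.2) ∘ (fun s => ((h s)⁻¹, γ s)) from rfl]
      exact mfderiv_comp_apply_of_eq u (hactsmooth.mdifferentiableAt (by simp))
        (hPs.mdifferentiableAt (by simp)) rfl (1 : ℝ)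
    -- split the total derivative of act
    have hsplit := mfderiv_prod_eq_add_apply (I := I) (I' := 𝓘(ℝ, Q)) (I'' := 𝓘(ℝ, Q))
      (f := fun q : K × Q => act q.1 q.2) (p := ((h u)⁻¹, γ u))
      (v := (mfderiv I I (fun k => (h u)⁻¹ * k⁻¹) 1 (α u),
             mfderiv I 𝓘(ℝ, Q) (fun k => act k (γ u)) 1 (α u)))
      (hactsmooth.mdifferentiableAt (by simp))
    simp only at hsplit
    -- term 1
    have hf1 : ContMDiff I I (⊤ : ℕ∞) (fun k : K => (h u)⁻¹ * k⁻¹) :=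
      contMDiff_mul_left.comp (contMDiff_inv I ((⊤ : ℕ∞) : WithTop ℕ∞))
    have hg1 : MDifferentiableAt I 𝓘(ℝ, Q) (fun z : K => act z (γ u)) (h u)⁻¹ :=
      (hactl (γ u)).mdifferentiableAt (by simp)
    have ht1 : mfderiv I 𝓘(ℝ, Q) (fun z : K => act z (γ u)) (h u)⁻¹
          (mfderiv I I (fun k => (h u)⁻¹ * k⁻¹) 1 (α u))
        = mfderiv I 𝓘(ℝ, Q) (fun k => act ((h u)⁻¹ * k⁻¹) (γ u)) 1 (α u) := by
      have h3 := mfderiv_comp_apply_of_eq (I := I) (I' := I) (I'' := 𝓘(ℝ, Q))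
        (f := fun k : K => (h u)⁻¹ * k⁻¹) (g := fun z : K => act z (γ u)) 1
        hg1 (hf1.mdifferentiableAt (by simp)) (by simp) (α u)
      rw [← h3]
      exact DFunLike.congr_fun (mfderiv_congr (I := I) (I' := 𝓘(ℝ, Q)) (x := (1 : K)) rfl) (α u)
    -- term 2
    have hg2 : MDifferentiableAt 𝓘(ℝ, Q) 𝓘(ℝ, Q) (fun z : Q => act (h u)⁻¹ z) (γ u) :=
      (hactsmooth.comp (contMDiff_const.prodMk contMDiff_id)).mdifferentiableAt (by simp)
    have ht2 : mfderiv 𝓘(ℝ, Q) 𝓘(ℝ, Q) (fun z : Q => act (h u)⁻¹ z) (γ u)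
          (mfderiv I 𝓘(ℝ, Q) (fun k => act k (γ u)) 1 (α u))
        = mfderiv I 𝓘(ℝ, Q) (fun k => act ((h u)⁻¹ * k) (γ u)) 1 (α u) := by
      have h4 := mfderiv_comp_apply_of_eq (I := I) (I' := 𝓘(ℝ, Q)) (I'' := 𝓘(ℝ, Q))
        (f := fun k : K => act k (γ u)) (g := fun z : Q => act (h u)⁻¹ z) 1
        hg2 ((hactl (γ u)).mdifferentiableAt (by simp)) (hactone (γ u)) (α u)
      rw [← h4]
      refine DFunLike.congr_fun (mfderiv_congr (I := I) (I' := 𝓘(ℝ, Q)) (x := (1 : K)) ?_) (α u)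
      funext k; simp only [Function.comp_apply]; exact (hactmul (h u)⁻¹ k (γ u)).symm
    rw [hc, hP, hv₁, hv₂]
    refine hsplit.trans ?_
    rw [ht1, ht2, aux_cancel hactsmooth (h u) (γ u) (α u)]
    exact neg_add_cancel _
  intro u
  have hdiff : Differentiable ℝ (fun s => act (h s)⁻¹ (γ s)) :=
    (contMDiff_iff_contDiff.mp hcs).differentiable (by simp)
  exact is_const_of_deriv_eq_zero hdiff hderiv u 0

end Aux2

/-- Let `H : I² → K` be a smooth map into a Lie group `K` with right
logarithmic derivatives `a = δᵣᵘH`, `b = δᵣᵉH` (i.e. `∂ᵤH = dr_H a`, `∂εH = dr_H b`),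
let `K` act smoothly on a manifold (modelled on `Q`) via `act`, let `γ₋` solve
`γ̇₋(u) = Υ(a(0,u))_{γ₋(u)}` where `Υ(ξ)ₓ = d/dα|₀ (exp(αξ) * x)` is the fundamental
vector field (realised as `mfderiv` of `k ↦ act k x` at `1`), and set
`X(ε,u) = (H(ε,u)·H(0,u)⁻¹) * γ₋(u)`.  Then `∂_ε X = Υ(b)_X` and `∂_u X = Υ(a)_X`. -/
theorem log_derivative_lifting_computation
    {E : Type*} [NormedAddCommGroup E] [NormedSpace ℝ E]
    {HK : Type*} [TopologicalSpace HK] (I : ModelWithCorners ℝ E HK)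
    {K : Type*} [TopologicalSpace K] [ChartedSpace HK K] [Group K]
    [IsManifold I (⊤ : ℕ∞) K] [LieGroup I (⊤ : ℕ∞) K]
    {Q : Type*} [NormedAddCommGroup Q] [NormedSpace ℝ Q]
    (act : K → Q → Q)
    (hactsmooth : ContMDiff (I.prod 𝓘(ℝ, Q)) 𝓘(ℝ, Q) (⊤ : ℕ∞) fun q : K × Q => act q.1 q.2)
    (hactone : ∀ x, act 1 x = x)
    (hactmul : ∀ k₁ k₂ x, act (k₁ * k₂) x = act k₁ (act k₂ x))
    (H : ℝ → ℝ → K)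
    (hH : ContMDiff (𝓘(ℝ, ℝ).prod 𝓘(ℝ, ℝ)) I (⊤ : ℕ∞) fun p : ℝ × ℝ => H p.1 p.2)
    (a b : ℝ → ℝ → E)
    (ha : ∀ ε u, mfderiv 𝓘(ℝ, ℝ) I (H ε) u (1 : ℝ)
        = mfderiv I I (fun k => k * H ε u) 1 (a ε u))
    (hb : ∀ ε u, mfderiv 𝓘(ℝ, ℝ) I (fun ε' => H ε' u) ε (1 : ℝ)
        = mfderiv I I (fun k => k * H ε u) 1 (b ε u))
    (γ : ℝ → Q) (hγsmooth : ContDiff ℝ (⊤ : ℕ∞) γ)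
    (hγ : ∀ u, deriv γ u = mfderiv I 𝓘(ℝ, Q) (fun k => act k (γ u)) 1 (a 0 u)) :
    ∀ ε u,
      deriv (fun ε' => act (H ε' u * (H 0 u)⁻¹) (γ u)) ε
        = mfderiv I 𝓘(ℝ, Q)
            (fun k => act k (act (H ε u * (H 0 u)⁻¹) (γ u))) 1 (b ε u) ∧
      deriv (fun u' => act (H ε u' * (H 0 u')⁻¹) (γ u')) u
        = mfderiv I 𝓘(ℝ, Q)
            (fun k => act k (act (H ε u * (H 0 u)⁻¹) (γ u))) 1 (a ε u) := by
  -- smoothness of the partial maps of H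
  have hrow : ∀ ε, ContMDiff 𝓘(ℝ, ℝ) I (⊤ : ℕ∞) (H ε) := fun ε =>
    hH.comp (contMDiff_const.prodMk contMDiff_id)
  have hcol : ∀ u, ContMDiff 𝓘(ℝ, ℝ) I (⊤ : ℕ∞) (fun ε' => H ε' u) := fun u =>
    hH.comp (contMDiff_id.prodMk contMDiff_const)
  -- the curve `u ↦ act (H 0 u)⁻¹ (γ u)` is constant
  have hconst : ∀ u, act (H 0 u)⁻¹ (γ u) = act (H 0 0)⁻¹ (γ 0) :=
    aux_const hactsmooth hactone hactmul (H 0) (hrow 0) (a 0) (ha 0) γ hγsmooth hγ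
  set c : Q := act (H 0 0)⁻¹ (γ 0) with hcdef
  have key : ∀ ε' u', act (H ε' u' * (H 0 u')⁻¹) (γ u') = act (H ε' u') c := by
    intro ε' u'
    rw [hactmul, hconst u']
  intro ε u
  constructor
  · have e1 : (fun ε' => act (H ε' u * (H 0 u)⁻¹) (γ u)) = fun ε' => act (H ε' u) c :=
      funext fun ε' => key ε' u
    have e2 : (fun k => act k (act (H ε u * (H 0 u)⁻¹) (γ u)))
        = fun k => act k (act (H ε u) c) := funext fun k => by rw [key ε u]
    rw [e1, show mfderiv I 𝓘(ℝ, Q) (fun k => act k (act (H ε u * (H 0 u)⁻¹) (γ u))) 1 (b ε u)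
        = mfderiv I 𝓘(ℝ, Q) (fun k => act k (act (H ε u) c)) 1 (b ε u) from
      DFunLike.congr_fun (mfderiv_congr (I := I) (I' := 𝓘(ℝ, Q)) (x := (1 : K)) e2) (b ε u)]
    exact aux_deriv_act hactsmooth hactmul (fun ε' => H ε' u) ε
      ((hcol u).mdifferentiableAt (by simp)) (b ε u) (hb ε u) c
  · have e1 : (fun u' => act (H ε u' * (H 0 u')⁻¹) (γ u')) = fun u' => act (H ε u') c :=
      funext fun u' => key ε u'
    have e2 : (fun k => act k (act (H ε u * (H 0 u)⁻¹) (γ u)))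
        = fun k => act k (act (H ε u) c) := funext fun k => by rw [key ε u]
    rw [e1, show mfderiv I 𝓘(ℝ, Q) (fun k => act k (act (H ε u * (H 0 u)⁻¹) (γ u))) 1 (a ε u)
        = mfderiv I 𝓘(ℝ, Q) (fun k => act k (act (H ε u) c)) 1 (a ε u) from
      DFunLike.congr_fun (mfderiv_congr (I := I) (I' := 𝓘(ℝ, Q)) (x := (1 : K)) e2) (a ε u)]
    exact aux_deriv_act hactsmooth hactmul (H ε) u
      ((hrow ε).mdifferentiableAt (by simp)) (a ε u) (ha ε u) c
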